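/- arXiv:1801.05398 — 5 statements merged into one kernel-verified Lean document; each statement's English description precedes it below -/
import Mathlib

section
/- Let g(y) = E[f(X) | Y=y, S=0]. Then for every f ∈ 𝓛(P_{X|S=0}), the limit Δ_λ(f) = lim_{ε→0⁺} (L_λ(P̃_{X|S=0}) − L_λ(P_{X|S=0}))/ε exists and equals λ₂·E[f(X)·log(P_{X|S=0}(X)/P_{X|S=1}(X)) | S=0] + λ₄·E[g(Y)·log(P_{Y|S=0}(Y)/P_{Y|S=1}(Y)) | S=0]. -/
open Filter Topology

/-- Kullback–Leibler divergence between distributions on a finite set. -/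
noncomputable def KLdiv {α : Type*} [Fintype α] (P Q : α → ℝ) : ℝ :=
  ∑ a, P a * Real.log (P a / Q a)

/-- The objective `L_λ` evaluated at the perturbed distribution
`P̃_{X|S=0}(x) = P0(x)(1+εf(x))`, with `P̃_{Y|S=0} = W ∘ P̃_{X|S=0}`:
`L_λ = λ₁·D(P̃_X‖P0) + λ₂·D(P̃_X‖P1) + λ₃·D(P̃_Y‖Q0) + λ₄·D(P̃_Y‖Q1)`.
At `ε = 0` this is `L_λ(P_{X|S=0})`. -/
noncomputable def Lobj {𝒳 : Type*} [Fintype 𝒳]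
    (P0 P1 : 𝒳 → ℝ) (W : 𝒳 → Bool → ℝ) (Q0 Q1 : Bool → ℝ)
    (l1 l2 l3 l4 : ℝ) (f : 𝒳 → ℝ) (ε : ℝ) : ℝ :=
  l1 * KLdiv (fun x => P0 x * (1 + ε * f x)) P0
    + l2 * KLdiv (fun x => P0 x * (1 + ε * f x)) P1
    + l3 * KLdiv (fun y => ∑ x, P0 x * (1 + ε * f x) * W x y) Q0
    + l4 * KLdiv (fun y => ∑ x, P0 x * (1 + ε * f x) * W x y) Q1

/-!
Along the tilt `P ↦ P·(1 + ε c)` with `∑ P c = 0`, each divergence `D(P̃‖Q)` has derivative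
`∑ P c (log (P/Q) + 1) = E_P[c · log (P/Q)]` at `ε = 0`; in particular `D(P̃‖P)` is stationary.
The channel maps the tilt of `P_{X|S=0}` by `f` to the tilt of `P_{Y|S=0}` by the posterior mean
`g`, which again has mean zero, so the `λ₁` and `λ₃` terms drop out.
-/

lemma hasDerivAt_tilt_mul_log_div {p q : ℝ} (c : ℝ) (hp : p ≠ 0) (hq : q ≠ 0) :
    HasDerivAt (fun ε : ℝ => p * (1 + ε * c) * Real.log (p * (1 + ε * c) / q))
      (p * c * (Real.log (p / q) + 1)) 0 := by
  have hlin : HasDerivAt (fun ε : ℝ => p * (1 + ε * c)) (p * c) 0 := by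
    simpa using (((hasDerivAt_id (0 : ℝ)).mul_const c).const_add 1).const_mul p
  have hne : p * (1 + (0 : ℝ) * c) / q ≠ 0 := by simpa using div_ne_zero hp hq
  refine (hlin.fun_mul ((hlin.div_const q).log hne)).congr_deriv ?_
  simp only [zero_mul, add_zero, mul_one]
  field_simp

lemma hasDerivAt_klDiv_tilt {α : Type*} [Fintype α] {P Q c : α → ℝ}
    (hP : ∀ a, P a ≠ 0) (hQ : ∀ a, Q a ≠ 0) (hc : ∑ a, P a * c a = 0) :
    HasDerivAt (fun ε => KLdiv (fun a => P a * (1 + ε * c a)) Q)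
      (∑ a, P a * (c a * Real.log (P a / Q a))) 0 := by
  refine (HasDerivAt.fun_sum fun a _ =>
    hasDerivAt_tilt_mul_log_div (c a) (hP a) (hQ a)).congr_deriv ?_
  calc ∑ a, P a * c a * (Real.log (P a / Q a) + 1)
      = ∑ a, P a * (c a * Real.log (P a / Q a)) + ∑ a, P a * c a := by
        rw [← Finset.sum_add_distrib]
        exact Finset.sum_congr rfl fun a _ => by ring
    _ = ∑ a, P a * (c a * Real.log (P a / Q a)) := by rw [hc, add_zero]

lemma hasDerivAt_klDiv_tilt_self {α : Type*} [Fintype α] {P c : α → ℝ}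
    (hP : ∀ a, P a ≠ 0) (hc : ∑ a, P a * c a = 0) :
    HasDerivAt (fun ε => KLdiv (fun a => P a * (1 + ε * c a)) P) 0 0 := by
  simpa [div_self (hP _)] using hasDerivAt_klDiv_tilt hP hP hc

section Channel

variable {𝒳 𝒴 : Type*} [Fintype 𝒳] {P f : 𝒳 → ℝ} {W : 𝒳 → 𝒴 → ℝ} {Q g : 𝒴 → ℝ}

lemma channel_tilt_eq (ε : ℝ) {y : 𝒴} (hQ : Q y = ∑ x, P x * W x y) (hQy : Q y ≠ 0)
    (hg : g y = (∑ x, P x * W x y * f x) / Q y) :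
    ∑ x, P x * (1 + ε * f x) * W x y = Q y * (1 + ε * g y) := by
  rw [hg, mul_add, mul_one, mul_left_comm, mul_div_cancel₀ _ hQy, hQ, Finset.mul_sum,
    ← Finset.sum_add_distrib]
  exact Finset.sum_congr rfl fun x _ => by ring

lemma sum_mul_posteriorMean_eq_zero [Fintype 𝒴] (hW : ∀ x, ∑ y, W x y = 1)
    (hQ : ∀ y, Q y ≠ 0) (hg : ∀ y, g y = (∑ x, P x * W x y * f x) / Q y)
    (hf : ∑ x, P x * f x = 0) :
    ∑ y, Q y * g y = 0 := by
  calc ∑ y, Q y * g y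
      = ∑ x, P x * f x * ∑ y, W x y := by
        simp_rw [hg, mul_div_cancel₀ _ (hQ _), Finset.mul_sum]
        rw [Finset.sum_comm]
        exact Finset.sum_congr rfl fun x _ => Finset.sum_congr rfl fun y _ => by ring
    _ = 0 := by simp only [hW, mul_one, hf]

end Channel

theorem stmt0_general
    {𝒳 : Type*} [Fintype 𝒳]
    (P0 P1 : 𝒳 → ℝ)
    (hP0pos : ∀ x, 0 < P0 x)
    (hP1pos : ∀ x, 0 < P1 x)
    (W : 𝒳 → Bool → ℝ)
    (hWsum : ∀ x, W x false + W x true = 1)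
    (Q0 Q1 : Bool → ℝ)
    (hQ0 : ∀ y, Q0 y = ∑ x, P0 x * W x y)
    (hQ0pos : ∀ y, 0 < Q0 y) (hQ1pos : ∀ y, 0 < Q1 y)
    (l1 l2 l3 l4 : ℝ)
    (f : 𝒳 → ℝ)
    (hfmean : ∑ x, P0 x * f x = 0)
    (g : Bool → ℝ)
    (hg : ∀ y, g y = (∑ x, P0 x * W x y * f x) / Q0 y) :
    Tendsto
      (fun ε : ℝ =>
        (Lobj P0 P1 W Q0 Q1 l1 l2 l3 l4 f ε - Lobj P0 P1 W Q0 Q1 l1 l2 l3 l4 f 0) / ε)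
      (nhdsWithin 0 (Set.Ioi 0))
      (nhds (l2 * ∑ x, P0 x * (f x * Real.log (P0 x / P1 x))
           + l4 * ∑ y, Q0 y * (g y * Real.log (Q0 y / Q1 y)))) := by
  have hP0ne x := (hP0pos x).ne'
  have hQ0ne y := (hQ0pos y).ne'
  have hgmean : ∑ y, Q0 y * g y = 0 :=
    sum_mul_posteriorMean_eq_zero (fun x => by rw [Fintype.sum_bool, add_comm, hWsum])
      hQ0ne hg hfmean
  have hL : Lobj P0 P1 W Q0 Q1 l1 l2 l3 l4 f = fun ε =>
      l1 * KLdiv (fun x => P0 x * (1 + ε * f x)) P0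
        + l2 * KLdiv (fun x => P0 x * (1 + ε * f x)) P1
        + l3 * KLdiv (fun y => Q0 y * (1 + ε * g y)) Q0
        + l4 * KLdiv (fun y => Q0 y * (1 + ε * g y)) Q1 := by
    funext ε
    simp only [Lobj, channel_tilt_eq ε (hQ0 _) (hQ0ne _) (hg _)]
  have hderiv : HasDerivAt (Lobj P0 P1 W Q0 Q1 l1 l2 l3 l4 f)
      (l2 * ∑ x, P0 x * (f x * Real.log (P0 x / P1 x))
        + l4 * ∑ y, Q0 y * (g y * Real.log (Q0 y / Q1 y))) 0 := by
    rw [hL]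
    refine ((((hasDerivAt_klDiv_tilt_self hP0ne hfmean).const_mul l1).add
      ((hasDerivAt_klDiv_tilt hP0ne (fun x => (hP1pos x).ne') hfmean).const_mul l2)).add
      ((hasDerivAt_klDiv_tilt_self hQ0ne hgmean).const_mul l3)).add
      ((hasDerivAt_klDiv_tilt hQ0ne (fun y => (hQ1pos y).ne') hgmean).const_mul l4)
      |>.congr_deriv (by ring)
  simpa [div_eq_inv_mul] using hderiv.tendsto_slope_zero_right

/-- Let `g(y) = E[f(X)|Y=y,S=0]`. Then for every `f ∈ 𝓛(P_{X|S=0})`, the limit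
`Δ_λ(f) = lim_{ε→0⁺} (L_λ(P̃_{X|S=0}) − L_λ(P_{X|S=0}))/ε` exists and equals
`λ₂·E[f(X)·log(P_{X|S=0}(X)/P_{X|S=1}(X))|S=0] + λ₄·E[g(Y)·log(P_{Y|S=0}(Y)/P_{Y|S=1}(Y))|S=0]`.
Here `𝒴 = Bool` (`false ↔ 0`, `true ↔ 1`), `W x y = W_{Y|X}(y|x)` is the channel in the
Markov chain `S → X → Y`, `P0 = P_{X|S=0}`, `P1 = P_{X|S=1}` have full support on `𝒳`,
and `Q0 = P_{Y|S=0} = W ∘ P0`, `Q1 = P_{Y|S=1} = W ∘ P1` have full support on `𝒴`. -/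
theorem stmt0
    {𝒳 : Type*} [Fintype 𝒳]
    (P0 P1 : 𝒳 → ℝ)
    (hP0pos : ∀ x, 0 < P0 x) (hP0sum : ∑ x, P0 x = 1)
    (hP1pos : ∀ x, 0 < P1 x) (hP1sum : ∑ x, P1 x = 1)
    (W : 𝒳 → Bool → ℝ)
    (hWnn : ∀ x y, 0 ≤ W x y) (hWsum : ∀ x, W x false + W x true = 1)
    (Q0 Q1 : Bool → ℝ)
    (hQ0 : ∀ y, Q0 y = ∑ x, P0 x * W x y) (hQ1 : ∀ y, Q1 y = ∑ x, P1 x * W x y)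
    (hQ0pos : ∀ y, 0 < Q0 y) (hQ1pos : ∀ y, 0 < Q1 y)
    (l1 l2 l3 l4 : ℝ)
    (hl1 : 0 ≤ l1) (hl2 : 0 ≤ l2) (hl3 : 0 ≤ l3) (hl4 : 0 ≤ l4)
    (f : 𝒳 → ℝ)
    (hfmean : ∑ x, P0 x * f x = 0) (hfvar : ∑ x, P0 x * f x ^ 2 = 1)
    (g : Bool → ℝ)
    (hg : ∀ y, g y = (∑ x, P0 x * W x y * f x) / Q0 y) :
    Tendsto
      (fun ε : ℝ =>
        (Lobj P0 P1 W Q0 Q1 l1 l2 l3 l4 f ε - Lobj P0 P1 W Q0 Q1 l1 l2 l3 l4 f 0) / ε)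
      (nhdsWithin 0 (Set.Ioi 0))
      (nhds (l2 * ∑ x, P0 x * (f x * Real.log (P0 x / P1 x))
           + l4 * ∑ y, Q0 y * (g y * Real.log (Q0 y / Q1 y)))) :=
  stmt0_general P0 P1 hP0pos hP1pos W hWsum Q0 Q1 hQ0 hQ0pos hQ1pos l1 l2 l3 l4 f hfmean g hg
end

section
/- The function f* = n_l·f_l + n_m·f_m, where n_l = −λ₂ / √((λ₂a₁+λ₄ρ_m b₁)² + (λ₂a₂)²) and n_m = −λ₄ρ_m b₁ / √((λ₂a₁+λ₄ρ_m b₁)² + (λ₂a₂)²), belongs to 𝓛(P_{X|S=0}) and minimizes Δ_λ(f) over all f ∈ 𝓛(P_{X|S=0}), i.e., Δ_λ(f*) ≤ Δ_λ(f) for every f ∈ 𝓛(P_{X|S=0}). -/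
/-!
For a centred direction `f` the `λ₁`- and `λ₃`-terms of `L_λ` are stationary at `ε = 0`, and the
other two give `Δ_λ(f) = λ₂ E₀[f f_l] + λ₄ Σ_y (W ∘ P₀f)(y) g_l(y)`. Since `𝒴` has two points,
the centred functions on `𝒴` form a line, so `g_l = b₁ g_m`; pulling `g_m` back through the channel
turns the second term into `λ₄ ρ_m b₁ E₀[f f_m]`. Hence `Δ_λ(f) = E₀[f φ]` with
`φ = λ₂ f_l + λ₄ ρ_m b₁ f_m`, and by Cauchy–Schwarz its minimum on the unit sphere is `-‖φ‖`,
attained at `-φ / ‖φ‖ = f*`. Finally `‖φ‖² = (λ₂a₁ + λ₄ρ_m b₁)² + (λ₂a₂)²`, because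
`f_l - a₁ f_m` is orthogonal to the unit vector `f_m` and has norm `a₂`.
-/

open Filter Topology

section WeightedSums

variable {ι : Type*} [Fintype ι] {P : ι → ℝ}

lemma sum_mul_sub_sum_mul_eq_zero (hP : ∑ i, P i = 1) (h : ι → ℝ) :
    ∑ i, P i * (h i - ∑ j, P j * h j) = 0 := by
  simp only [mul_sub, Finset.sum_sub_distrib, ← Finset.sum_mul, hP, one_mul, sub_self]

lemma sum_mul_add_const_of_sum_eq_zero {d : ι → ℝ} (hd : ∑ i, d i = 0) (h : ι → ℝ) (c : ℝ) :
    ∑ i, d i * (h i + c) = ∑ i, d i * h i := by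
  simp only [mul_add, Finset.sum_add_distrib, ← Finset.sum_mul, hd, zero_mul, add_zero]

lemma sum_mul_add_mul (u v : ι → ℝ) (a b : ℝ) :
    ∑ i, P i * (a * u i + b * v i) = a * ∑ i, P i * u i + b * ∑ i, P i * v i := by
  simp only [Finset.mul_sum, ← Finset.sum_add_distrib]
  exact Finset.sum_congr rfl fun i _ => by ring

lemma sum_mul_add_mul_sq (u v : ι → ℝ) (a b : ℝ) :
    ∑ i, P i * (a * u i + b * v i) ^ 2
      = a ^ 2 * ∑ i, P i * u i ^ 2 + 2 * a * b * ∑ i, P i * (u i * v i)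
        + b ^ 2 * ∑ i, P i * v i ^ 2 := by
  simp only [Finset.mul_sum, ← Finset.sum_add_distrib]
  exact Finset.sum_congr rfl fun i _ => by ring

lemma sum_mul_sq_eq_sq_add_sq (hP : ∀ i, 0 ≤ P i) {u v : ι → ℝ} {a b : ℝ}
    (hv : ∑ i, P i * v i ^ 2 = 1) (ha : a = ∑ i, P i * (u i * v i))
    (hb : b = √(∑ i, P i * (u i - a * v i) ^ 2)) :
    ∑ i, P i * u i ^ 2 = a ^ 2 + b ^ 2 := by
  rw [hb, Real.sq_sqrt (Finset.sum_nonneg fun i _ => mul_nonneg (hP i) (sq_nonneg _))]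
  have h := sum_mul_add_mul_sq (P := P) u v 1 (-a)
  simp only [one_mul, neg_mul, ← sub_eq_add_neg, hv, ← ha] at h
  rw [h]
  ring

lemma neg_le_sum_mul_mul_of_sum_mul_sq_eq (hP : ∀ i, 0 ≤ P i) {f φ : ι → ℝ} {s : ℝ} (hs : 0 ≤ s)
    (hf : ∑ i, P i * f i ^ 2 = 1) (hφ : ∑ i, P i * φ i ^ 2 = s ^ 2) :
    -s ≤ ∑ i, P i * (f i * φ i) := by
  have hCS : (∑ i, P i * (f i * φ i)) ^ 2 ≤ (∑ i, P i * f i ^ 2) * ∑ i, P i * φ i ^ 2 :=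
    Finset.sum_sq_le_sum_mul_sum_of_sq_le_mul _
      (fun i _ => mul_nonneg (hP i) (sq_nonneg _)) (fun i _ => mul_nonneg (hP i) (sq_nonneg _))
      (fun i _ => le_of_eq (by ring))
  rw [hf, hφ, one_mul] at hCS
  exact (abs_le_of_sq_le_sq' hCS hs).1

variable {φ fs : ι → ℝ} {s : ℝ}

lemma sum_mul_eq_zero_of_eq_neg_div (hφ : ∑ i, P i * φ i = 0) (hfs : ∀ i, fs i = -φ i / s) :
    ∑ i, P i * fs i = 0 := by
  simp only [hfs, mul_div_assoc', mul_neg, neg_div, Finset.sum_neg_distrib, ← Finset.sum_div, hφ,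
    zero_div, neg_zero]

lemma sum_mul_sq_eq_one_of_eq_div (hs : s ≠ 0) (hφ : ∑ i, P i * φ i ^ 2 = s ^ 2)
    (hfs : ∀ i, fs i = φ i / s) : ∑ i, P i * fs i ^ 2 = 1 := by
  simp only [hfs, div_pow, mul_div_assoc', ← Finset.sum_div, hφ]
  exact div_self (pow_ne_zero 2 hs)

lemma sum_mul_mul_eq_neg_of_eq_neg_div (hs : s ≠ 0) (hφ : ∑ i, P i * φ i ^ 2 = s ^ 2)
    (hfs : ∀ i, fs i = -φ i / s) : ∑ i, P i * (fs i * φ i) = -s := by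
  have h : ∀ i, P i * (fs i * φ i) = -(P i * φ i ^ 2) / s := fun i => by rw [hfs]; ring
  simp only [h, neg_div, Finset.sum_neg_distrib, ← Finset.sum_div, hφ]
  field_simp

end WeightedSums

section TwoPoint

variable {Q : Bool → ℝ}

lemma eq_sum_mul_mul_mul_of_centered_bool (hQ : Q true ≠ 0) {g e : Bool → ℝ}
    (hg : ∑ y, Q y * g y = 0) (he : ∑ y, Q y * e y = 0) (he2 : ∑ y, Q y * e y ^ 2 = 1)
    (y : Bool) : g y = (∑ y', Q y' * (g y' * e y')) * e y := by
  simp only [Fintype.sum_bool] at hg he he2 ⊢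
  have hcross : g false * e true = g true * e false :=
    mul_left_cancel₀ hQ (by linear_combination g false * he - e false * hg)
  cases y
  · linear_combination -g false * he2 + Q true * e true * hcross
  · linear_combination -g true * he2 - Q false * e false * hcross

lemma sum_mul_eq_zero_and_sum_mul_sq_eq_one_of_bool (hQ : ∀ y, 0 < Q y)
    (hQsum : ∑ y, Q y = 1) {e : Bool → ℝ}
    (hef : e false = √(Q true / (1 - Q true))) (het : e true = -√((1 - Q true) / Q true)) :
    ∑ y, Q y * e y = 0 ∧ ∑ y, Q y * e y ^ 2 = 1 := by
  rw [Fintype.sum_bool] at hQsum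
  have hQf : 1 - Q true = Q false := by linarith
  rw [hQf] at hef het
  have he0 : e false ≠ 0 := (hef ▸ Real.sqrt_pos.2 (div_pos (hQ true) (hQ false))).ne'
  have hsq : Q false * e false ^ 2 = Q true := by
    rw [hef, Real.sq_sqrt (div_pos (hQ true) (hQ false)).le]
    field_simp [(hQ false).ne']
  have het' : e true = -(e false)⁻¹ := by rw [het, hef, ← Real.sqrt_inv, inv_div]
  simp only [Fintype.sum_bool, het']
  constructor
  · rw [← hsq]
    field_simp
    ring
  · rw [← hQsum, ← hsq]
    field_simp
    ring

end TwoPoint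

section Channel

variable {𝒳 : Type*} [Fintype 𝒳] {W : 𝒳 → Bool → ℝ}

lemma sum_sum_mul_channel (hWsum : ∀ x, W x false + W x true = 1) (d : 𝒳 → ℝ) :
    ∑ y, ∑ x, d x * W x y = ∑ x, d x := by
  rw [Finset.sum_comm]
  exact Finset.sum_congr rfl fun x _ => by
    rw [← Finset.mul_sum, Fintype.sum_bool, add_comm, hWsum, mul_one]

lemma sum_mul_channel_apply (P : 𝒳 → ℝ) (g : Bool → ℝ) :
    ∑ x, P x * (g false * W x false + g true * W x true) = ∑ y, (∑ x, P x * W x y) * g y := by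
  simp only [Fintype.sum_bool, Finset.sum_mul, ← Finset.sum_add_distrib]
  exact Finset.sum_congr rfl fun x _ => by ring

lemma sum_mul_eq_zero_of_channel {P h : 𝒳 → ℝ} {Q g : Bool → ℝ} {ρ : ℝ}
    (hQ : ∀ y, Q y = ∑ x, P x * W x y) (hρ : ρ ≠ 0)
    (hh : ∀ x, ρ * h x = g false * W x false + g true * W x true)
    (hg : ∑ y, Q y * g y = 0) : ∑ x, P x * h x = 0 := by
  refine (mul_eq_zero.1 ?_).resolve_left hρ
  simp only [Finset.mul_sum, mul_left_comm ρ, hh, sum_mul_channel_apply, ← hQ, hg]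

end Channel

lemma hasDerivAt_affine_mul_log_div {c d r : ℝ} (hc : c ≠ 0) (hr : r ≠ 0) :
    HasDerivAt (fun ε : ℝ => (c + ε * d) * Real.log ((c + ε * d) / r))
      (d * (Real.log (c / r) + 1)) 0 := by
  have hlin : HasDerivAt (fun ε : ℝ => c + ε * d) d 0 := by
    simpa using ((hasDerivAt_id (0 : ℝ)).mul_const d).const_add c
  have hlog := (hlin.div_const r).log (by simpa using div_ne_zero hc hr)
  refine (hlin.fun_mul hlog).congr_deriv ?_
  simp only [zero_mul, add_zero]
  field_simp

lemma hasDerivAt_KLdiv_add_mul {α : Type*} [Fintype α] {P R d : α → ℝ}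
    (hP : ∀ a, P a ≠ 0) (hR : ∀ a, R a ≠ 0) (hd : ∑ a, d a = 0) :
    HasDerivAt (fun ε : ℝ => KLdiv (fun a => P a + ε * d a) R)
      (∑ a, d a * Real.log (P a / R a)) 0 := by
  refine (HasDerivAt.fun_sum fun a (_ : a ∈ Finset.univ) =>
    hasDerivAt_affine_mul_log_div (d := d a) (hP a) (hR a)).congr_deriv ?_
  simp only [mul_add, mul_one, Finset.sum_add_distrib, hd, add_zero]

section Lobj

variable {𝒳 : Type*} [Fintype 𝒳] {P0 P1 : 𝒳 → ℝ} {W : 𝒳 → Bool → ℝ} {Q0 Q1 : Bool → ℝ}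
  {l1 l2 l3 l4 : ℝ} {f : 𝒳 → ℝ}

lemma Lobj_eq_KLdiv_add_mul (hQ0 : ∀ y, Q0 y = ∑ x, P0 x * W x y) :
    Lobj P0 P1 W Q0 Q1 l1 l2 l3 l4 f = fun ε =>
      l1 * KLdiv (fun x => P0 x + ε * (P0 x * f x)) P0
        + l2 * KLdiv (fun x => P0 x + ε * (P0 x * f x)) P1
        + l3 * KLdiv (fun y => Q0 y + ε * ∑ x, P0 x * f x * W x y) Q0
        + l4 * KLdiv (fun y => Q0 y + ε * ∑ x, P0 x * f x * W x y) Q1 := by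
  ext ε
  have hX : (fun x => P0 x * (1 + ε * f x)) = fun x => P0 x + ε * (P0 x * f x) := by
    ext x; ring
  have hY : (fun y => ∑ x, P0 x * (1 + ε * f x) * W x y)
      = fun y => Q0 y + ε * ∑ x, P0 x * f x * W x y := by
    ext y
    rw [hQ0, Finset.mul_sum, ← Finset.sum_add_distrib]
    exact Finset.sum_congr rfl fun x _ => by ring
  rw [Lobj, hX, hY]

lemma hasDerivAt_Lobj (hP0 : ∀ x, P0 x ≠ 0) (hP1 : ∀ x, P1 x ≠ 0)
    (hWsum : ∀ x, W x false + W x true = 1) (hQ0 : ∀ y, Q0 y = ∑ x, P0 x * W x y)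
    (hQ0ne : ∀ y, Q0 y ≠ 0) (hQ1ne : ∀ y, Q1 y ≠ 0) (hf : ∑ x, P0 x * f x = 0) :
    HasDerivAt (Lobj P0 P1 W Q0 Q1 l1 l2 l3 l4 f)
      (l2 * ∑ x, P0 x * f x * Real.log (P0 x / P1 x)
        + l4 * ∑ y, (∑ x, P0 x * f x * W x y) * Real.log (Q0 y / Q1 y)) 0 := by
  have hfY : ∑ y, ∑ x, P0 x * f x * W x y = 0 := by rw [sum_sum_mul_channel hWsum, hf]
  rw [Lobj_eq_KLdiv_add_mul hQ0]
  refine ((((hasDerivAt_KLdiv_add_mul hP0 hP0 hf).const_mul l1).fun_add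
    ((hasDerivAt_KLdiv_add_mul hP0 hP1 hf).const_mul l2)).fun_add
    ((hasDerivAt_KLdiv_add_mul hQ0ne hQ0ne hfY).const_mul l3)).fun_add
    ((hasDerivAt_KLdiv_add_mul hQ0ne hQ1ne hfY).const_mul l4) |>.congr_deriv ?_
  simp [div_self, hP0, hQ0ne]

lemma eq_of_tendsto_Lobj_slope (hP0 : ∀ x, P0 x ≠ 0) (hP1 : ∀ x, P1 x ≠ 0)
    (hWsum : ∀ x, W x false + W x true = 1) (hQ0 : ∀ y, Q0 y = ∑ x, P0 x * W x y)
    (hQ0ne : ∀ y, Q0 y ≠ 0) (hQ1ne : ∀ y, Q1 y ≠ 0) (hf : ∑ x, P0 x * f x = 0) {D : ℝ}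
    (hD : Tendsto (fun ε : ℝ => (Lobj P0 P1 W Q0 Q1 l1 l2 l3 l4 f ε
      - Lobj P0 P1 W Q0 Q1 l1 l2 l3 l4 f 0) / ε) (𝓝[>] 0) (𝓝 D)) :
    D = l2 * ∑ x, P0 x * f x * Real.log (P0 x / P1 x)
      + l4 * ∑ y, (∑ x, P0 x * f x * W x y) * Real.log (Q0 y / Q1 y) :=
  tendsto_nhds_unique hD <|
    (hasDerivAt_Lobj (l1 := l1) (l3 := l3) hP0 hP1 hWsum hQ0 hQ0ne hQ1ne hf)
      |>.tendsto_slope_zero_right.congr fun ε => by simp [div_eq_inv_mul]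

lemma eq_sum_mul_of_tendsto_Lobj_slope (hP0 : ∀ x, P0 x ≠ 0) (hP1 : ∀ x, P1 x ≠ 0)
    (hWsum : ∀ x, W x false + W x true = 1) (hQ0 : ∀ y, Q0 y = ∑ x, P0 x * W x y)
    (hQ0ne : ∀ y, Q0 y ≠ 0) (hQ1ne : ∀ y, Q1 y ≠ 0) {fl fm : 𝒳 → ℝ} {gm : Bool → ℝ}
    {cX cY b ρ : ℝ} (hfl : ∀ x, fl x = Real.log (P0 x / P1 x) - cX)
    (hgl : ∀ y, b * gm y = Real.log (Q0 y / Q1 y) - cY)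
    (hfm : ∀ x, ρ * fm x = gm false * W x false + gm true * W x true)
    (hf : ∑ x, P0 x * f x = 0) {D : ℝ}
    (hD : Tendsto (fun ε : ℝ => (Lobj P0 P1 W Q0 Q1 l1 l2 l3 l4 f ε
      - Lobj P0 P1 W Q0 Q1 l1 l2 l3 l4 f 0) / ε) (𝓝[>] 0) (𝓝 D)) :
    D = ∑ x, P0 x * (f x * (l2 * fl x + l4 * ρ * b * fm x)) := by
  have hfY : ∑ y, ∑ x, P0 x * f x * W x y = 0 := by rw [sum_sum_mul_channel hWsum, hf]
  have hlogX : ∀ x, Real.log (P0 x / P1 x) = fl x + cX := fun x => by rw [hfl]; ring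
  have hlogY : ∀ y, Real.log (Q0 y / Q1 y) = b * gm y + cY := fun y => by rw [hgl]; ring
  rw [eq_of_tendsto_Lobj_slope hP0 hP1 hWsum hQ0 hQ0ne hQ1ne hf hD]
  simp only [hlogX, hlogY, sum_mul_add_const_of_sum_eq_zero hf,
    sum_mul_add_const_of_sum_eq_zero hfY]
  simp only [Fintype.sum_bool, Finset.sum_mul, Finset.mul_sum, ← Finset.sum_add_distrib]
  refine Finset.sum_congr rfl fun x _ => ?_
  linear_combination -l4 * b * P0 x * f x * hfm x

end Lobj

theorem stmt1_general
    {𝒳 : Type*} [Fintype 𝒳]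
    (P0 P1 : 𝒳 → ℝ)
    (hP0pos : ∀ x, 0 < P0 x) (hP0sum : ∑ x, P0 x = 1)
    (hP1pos : ∀ x, 0 < P1 x)
    (W : 𝒳 → Bool → ℝ)
    (hWsum : ∀ x, W x false + W x true = 1)
    (Q0 Q1 : Bool → ℝ)
    (hQ0 : ∀ y, Q0 y = ∑ x, P0 x * W x y)
    (hQ0pos : ∀ y, 0 < Q0 y) (hQ1pos : ∀ y, 0 < Q1 y)
    (l1 l2 l3 l4 : ℝ)
    (fl : 𝒳 → ℝ)
    (hfl : ∀ x, fl x = Real.log (P0 x / P1 x) - ∑ x', P0 x' * Real.log (P0 x' / P1 x'))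
    (gl : Bool → ℝ)
    (hgl : ∀ y, gl y = Real.log (Q0 y / Q1 y) - ∑ y', Q0 y' * Real.log (Q0 y' / Q1 y'))
    (gm : Bool → ℝ)
    (hgmf : gm false = Real.sqrt (Q0 true / (1 - Q0 true)))
    (hgmt : gm true = -Real.sqrt ((1 - Q0 true) / Q0 true))
    (ρm : ℝ)
    (hρm : ρm = Real.sqrt (∑ x, P0 x * (gm false * W x false + gm true * W x true) ^ 2))
    (hρmpos : 0 < ρm)
    (fm : 𝒳 → ℝ)
    (hfm : ∀ x, fm x = (gm false * W x false + gm true * W x true) / ρm)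
    (a1 a2 b1 : ℝ)
    (ha1 : a1 = ∑ x, P0 x * (fl x * fm x))
    (ha2 : a2 = Real.sqrt (∑ x, P0 x * (fl x - a1 * fm x) ^ 2))
    (hb1 : b1 = ∑ y, Q0 y * (gl y * gm y))
    (hden : 0 < (l2 * a1 + l4 * ρm * b1) ^ 2 + (l2 * a2) ^ 2)
    (nl nm : ℝ)
    (hnl : nl = -l2 / Real.sqrt ((l2 * a1 + l4 * ρm * b1) ^ 2 + (l2 * a2) ^ 2))
    (hnm : nm = -(l4 * ρm * b1) / Real.sqrt ((l2 * a1 + l4 * ρm * b1) ^ 2 + (l2 * a2) ^ 2))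
    (fstar : 𝒳 → ℝ)
    (hfstar : ∀ x, fstar x = nl * fl x + nm * fm x) :
    ((∑ x, P0 x * fstar x = 0) ∧ (∑ x, P0 x * fstar x ^ 2 = 1)) ∧
      ∀ f : 𝒳 → ℝ, (∑ x, P0 x * f x = 0) → (∑ x, P0 x * f x ^ 2 = 1) →
        ∀ Dstar D : ℝ,
          Tendsto
            (fun ε : ℝ =>
              (Lobj P0 P1 W Q0 Q1 l1 l2 l3 l4 fstar ε
                - Lobj P0 P1 W Q0 Q1 l1 l2 l3 l4 fstar 0) / ε)
            (nhdsWithin 0 (Set.Ioi 0)) (nhds Dstar) →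
          Tendsto
            (fun ε : ℝ =>
              (Lobj P0 P1 W Q0 Q1 l1 l2 l3 l4 f ε
                - Lobj P0 P1 W Q0 Q1 l1 l2 l3 l4 f 0) / ε)
            (nhdsWithin 0 (Set.Ioi 0)) (nhds D) →
          Dstar ≤ D := by
  have hQ0sum : ∑ y, Q0 y = 1 := by simp only [hQ0]; rw [sum_sum_mul_channel hWsum, hP0sum]
  obtain ⟨hgm0, hgm2⟩ := sum_mul_eq_zero_and_sum_mul_sq_eq_one_of_bool hQ0pos hQ0sum hgmf hgmt
  have hgl0 : ∑ y, Q0 y * gl y = 0 := by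
    simpa only [hgl] using sum_mul_sub_sum_mul_eq_zero hQ0sum fun y => Real.log (Q0 y / Q1 y)
  have hglgm : ∀ y, gl y = b1 * gm y :=
    hb1 ▸ eq_sum_mul_mul_mul_of_centered_bool (hQ0pos true).ne' hgl0 hgm0 hgm2
  have hfl0 : ∑ x, P0 x * fl x = 0 := by
    simpa only [hfl] using sum_mul_sub_sum_mul_eq_zero hP0sum fun x => Real.log (P0 x / P1 x)
  have hρfm : ∀ x, ρm * fm x = gm false * W x false + gm true * W x true := fun x => by
    rw [hfm]; field_simp
  have hfm0 := sum_mul_eq_zero_of_channel hQ0 hρmpos.ne' hρfm hgm0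
  have hfm2 : ∑ x, P0 x * fm x ^ 2 = 1 := sum_mul_sq_eq_one_of_eq_div hρmpos.ne'
    (by rw [hρm, Real.sq_sqrt (Real.sqrt_pos.1 (hρm ▸ hρmpos)).le]) hfm
  have hfl2 := sum_mul_sq_eq_sq_add_sq (fun x => (hP0pos x).le) hfm2 ha1 ha2
  set B := l4 * ρm * b1
  set s := √((l2 * a1 + B) ^ 2 + (l2 * a2) ^ 2)
  have hs : s ≠ 0 := (Real.sqrt_pos.2 hden).ne'
  have hφ2 : ∑ x, P0 x * (l2 * fl x + B * fm x) ^ 2 = s ^ 2 := by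
    rw [sum_mul_add_mul_sq, hfl2, hfm2, ← ha1, Real.sq_sqrt hden.le]; ring
  have hfs : ∀ x, fstar x = -(l2 * fl x + B * fm x) / s := fun x => by
    rw [hfstar, hnl, hnm]; ring
  have hΔ : ∀ f, ∑ x, P0 x * f x = 0 → ∀ D, Tendsto (fun ε : ℝ =>
      (Lobj P0 P1 W Q0 Q1 l1 l2 l3 l4 f ε - Lobj P0 P1 W Q0 Q1 l1 l2 l3 l4 f 0) / ε)
      (𝓝[>] 0) (𝓝 D) → D = ∑ x, P0 x * (f x * (l2 * fl x + B * fm x)) :=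
    fun f hf D hD => eq_sum_mul_of_tendsto_Lobj_slope (fun x => (hP0pos x).ne')
      (fun x => (hP1pos x).ne') hWsum hQ0 (fun y => (hQ0pos y).ne') (fun y => (hQ1pos y).ne')
      hfl (fun y => (hglgm y).symm.trans (hgl y)) hρfm hf hD
  have hfs0 : ∑ x, P0 x * fstar x = 0 :=
    sum_mul_eq_zero_of_eq_neg_div (by rw [sum_mul_add_mul, hfl0, hfm0]; ring) hfs
  refine ⟨⟨hfs0, sum_mul_sq_eq_one_of_eq_div hs (by simpa only [neg_sq] using hφ2) hfs⟩,
    fun f hf0 hf2 Dstar D hDstar hD => ?_⟩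
  rw [hΔ fstar hfs0 Dstar hDstar, hΔ f hf0 D hD, sum_mul_mul_eq_neg_of_eq_neg_div hs hφ2 hfs]
  exact neg_le_sum_mul_mul_of_sum_mul_sq_eq (fun x => (hP0pos x).le) (Real.sqrt_nonneg _) hf2 hφ2

/-- Theorem 1 of the paper: the function `f* = n_l·f_l + n_m·f_m`, with
`n_l = −λ₂ / √((λ₂a₁+λ₄ρ_m b₁)² + (λ₂a₂)²)` and
`n_m = −λ₄ρ_m b₁ / √((λ₂a₁+λ₄ρ_m b₁)² + (λ₂a₂)²)`, belongs to `𝓛(P_{X|S=0})` and minimizes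
`Δ_λ(f) = lim_{ε→0⁺}(L_λ(P̃_{X|S=0}) − L_λ(P_{X|S=0}))/ε` over all `f ∈ 𝓛(P_{X|S=0})`:
whenever the limits `Δ_λ(f*) = Dstar` and `Δ_λ(f) = D` exist, `Dstar ≤ D`.
Here `𝒴 = Bool` (`false ↔ 0`, `true ↔ 1`), `W x y = W_{Y|X}(y|x)`, `P0 = P_{X|S=0}`,
`P1 = P_{X|S=1}` (full support), `Q0 = P_{Y|S=0} = W ∘ P0`, `Q1 = P_{Y|S=1} = W ∘ P1`
(full support), `p = Q0 true ∈ (0,1)`, `g_m(0) = √(p/(1−p))`, `g_m(1) = −√((1−p)/p)`,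
`ρ_m = √(E[E[g_m(Y)|X,S=0]²|S=0]) > 0`, `f_m(x) = E[g_m(Y)|X=x,S=0]/ρ_m`,
`f_l`, `g_l` are the centered log-likelihood ratios, `a₁ = E[f_l f_m|S=0]`,
`a₂ = √(E[(f_l−a₁f_m)²|S=0])`, `b₁ = E[g_l g_m|S=0]`, and
`(λ₂a₁+λ₄ρ_m b₁)² + (λ₂a₂)² > 0`. -/
theorem stmt1
    {𝒳 : Type*} [Fintype 𝒳]
    (P0 P1 : 𝒳 → ℝ)
    (hP0pos : ∀ x, 0 < P0 x) (hP0sum : ∑ x, P0 x = 1)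
    (hP1pos : ∀ x, 0 < P1 x) (hP1sum : ∑ x, P1 x = 1)
    (W : 𝒳 → Bool → ℝ)
    (hWnn : ∀ x y, 0 ≤ W x y) (hWsum : ∀ x, W x false + W x true = 1)
    (Q0 Q1 : Bool → ℝ)
    (hQ0 : ∀ y, Q0 y = ∑ x, P0 x * W x y) (hQ1 : ∀ y, Q1 y = ∑ x, P1 x * W x y)
    (hQ0pos : ∀ y, 0 < Q0 y) (hQ1pos : ∀ y, 0 < Q1 y)
    (l1 l2 l3 l4 : ℝ)
    (hl1 : 0 ≤ l1) (hl2 : 0 ≤ l2) (hl3 : 0 ≤ l3) (hl4 : 0 ≤ l4)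
    (fl : 𝒳 → ℝ)
    (hfl : ∀ x, fl x = Real.log (P0 x / P1 x) - ∑ x', P0 x' * Real.log (P0 x' / P1 x'))
    (gl : Bool → ℝ)
    (hgl : ∀ y, gl y = Real.log (Q0 y / Q1 y) - ∑ y', Q0 y' * Real.log (Q0 y' / Q1 y'))
    (hp1 : Q0 true < 1)
    (gm : Bool → ℝ)
    (hgmf : gm false = Real.sqrt (Q0 true / (1 - Q0 true)))
    (hgmt : gm true = -Real.sqrt ((1 - Q0 true) / Q0 true))
    (ρm : ℝ)
    (hρm : ρm = Real.sqrt (∑ x, P0 x * (gm false * W x false + gm true * W x true) ^ 2))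
    (hρmpos : 0 < ρm)
    (fm : 𝒳 → ℝ)
    (hfm : ∀ x, fm x = (gm false * W x false + gm true * W x true) / ρm)
    (a1 a2 b1 : ℝ)
    (ha1 : a1 = ∑ x, P0 x * (fl x * fm x))
    (ha2 : a2 = Real.sqrt (∑ x, P0 x * (fl x - a1 * fm x) ^ 2))
    (hb1 : b1 = ∑ y, Q0 y * (gl y * gm y))
    (hden : 0 < (l2 * a1 + l4 * ρm * b1) ^ 2 + (l2 * a2) ^ 2)
    (nl nm : ℝ)
    (hnl : nl = -l2 / Real.sqrt ((l2 * a1 + l4 * ρm * b1) ^ 2 + (l2 * a2) ^ 2))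
    (hnm : nm = -(l4 * ρm * b1) / Real.sqrt ((l2 * a1 + l4 * ρm * b1) ^ 2 + (l2 * a2) ^ 2))
    (fstar : 𝒳 → ℝ)
    (hfstar : ∀ x, fstar x = nl * fl x + nm * fm x) :
    ((∑ x, P0 x * fstar x = 0) ∧ (∑ x, P0 x * fstar x ^ 2 = 1)) ∧
      ∀ f : 𝒳 → ℝ, (∑ x, P0 x * f x = 0) → (∑ x, P0 x * f x ^ 2 = 1) →
        ∀ Dstar D : ℝ,
          Tendsto
            (fun ε : ℝ =>
              (Lobj P0 P1 W Q0 Q1 l1 l2 l3 l4 fstar ε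
                - Lobj P0 P1 W Q0 Q1 l1 l2 l3 l4 fstar 0) / ε)
            (nhdsWithin 0 (Set.Ioi 0)) (nhds Dstar) →
          Tendsto
            (fun ε : ℝ =>
              (Lobj P0 P1 W Q0 Q1 l1 l2 l3 l4 f ε
                - Lobj P0 P1 W Q0 Q1 l1 l2 l3 l4 f 0) / ε)
            (nhdsWithin 0 (Set.Ioi 0)) (nhds D) →
          Dstar ≤ D :=
  stmt1_general P0 P1 hP0pos hP0sum hP1pos W hWsum Q0 Q1 hQ0 hQ0pos hQ1pos l1 l2 l3 l4 fl hfl gl hgl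
    gm hgmf hgmt ρm hρm hρmpos fm hfm a1 a2 b1 ha1 ha2 hb1 hden nl nm hnl hnm fstar hfstar
end

section
/- If P_{S|X}(1|x) = (1 + exp(θ₀ + ⟨θ, x⟩))⁻¹ for all x ∈ 𝒳, where θ₀ ∈ ℝ and θ ∈ ℝᵈ, then f_l(x) = ⟨θ, x⟩ − Σᵢ₌₁ᵈ E[θᵢ Xᵢ | S=0] for all x ∈ 𝒳. -/
/-- If `P_{S|X}(1|x) = (1 + exp(θ₀ + ⟨θ,x⟩))⁻¹` for all `x ∈ 𝒳`, then
`f_l(x) = ⟨θ,x⟩ − ∑ᵢ E[θᵢ·Xᵢ|S=0]` for all `x ∈ 𝒳`.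
Here `𝒳` is a finite subset of `ℝᵈ`, realized as a finite type `𝒳` together with an
injective feature map `v : 𝒳 → (Fin d → ℝ)`; `⟨θ,x⟩ = ∑ i, θ i * v x i`.
`S = Bool` (`false ↔ 0`, `true ↔ 1`), `PSX` is the joint distribution `P_{S,X}`
(everywhere positive, so `P_S(0), P_S(1) > 0` and both conditionals have full support),
`PX0 = P_{X|S=0}`, `PX1 = P_{X|S=1}`, `PSgX s x = P_{S|X}(s|x)`, and
`f_l(x) = log(PX0(x)/PX1(x)) − E[log(PX0(X)/PX1(X))|S=0]` with `E[·|S=0]` the expectation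
under `PX0`. -/
theorem stmt7
    {d : ℕ} {𝒳 : Type*} [Fintype 𝒳]
    (v : 𝒳 → Fin d → ℝ) (hv : Function.Injective v)
    (PSX : Bool → 𝒳 → ℝ)
    (hpos : ∀ s x, 0 < PSX s x)
    (hsum : ∑ s : Bool, ∑ x, PSX s x = 1)
    (PX0 PX1 : 𝒳 → ℝ)
    (hPX0 : ∀ x, PX0 x = PSX false x / ∑ x', PSX false x')
    (hPX1 : ∀ x, PX1 x = PSX true x / ∑ x', PSX true x')
    (PSgX : Bool → 𝒳 → ℝ)
    (hPSgX : ∀ s x, PSgX s x = PSX s x / (PSX false x + PSX true x))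
    (fl : 𝒳 → ℝ)
    (hfl : ∀ x, fl x = Real.log (PX0 x / PX1 x)
        - ∑ x', PX0 x' * Real.log (PX0 x' / PX1 x'))
    (θ0 : ℝ) (θ : Fin d → ℝ)
    (hlogistic : ∀ x, PSgX true x = (1 + Real.exp (θ0 + ∑ i, θ i * v x i))⁻¹) :
    ∀ x, fl x = (∑ i, θ i * v x i) - ∑ i, ∑ x', PX0 x' * (θ i * v x' i) := by
  intro x
  by_cases hempty : Nonempty 𝒳
  swap
  · exact absurd ⟨x⟩ hempty
  set A := ∑ x', PSX false x' with hA
  set B := ∑ x', PSX true x' with hB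
  have hApos : 0 < A := Finset.sum_pos (fun x' _ => hpos false x') Finset.univ_nonempty
  have hBpos : 0 < B := Finset.sum_pos (fun x' _ => hpos true x') Finset.univ_nonempty
  -- key: PSX false x = PSX true x * exp(θ0 + ⟨θ,x⟩)
  have hkey : ∀ y, PSX false y = PSX true y * Real.exp (θ0 + ∑ i, θ i * v y i) := by
    intro y
    have h1 := hlogistic y
    rw [hPSgX] at h1
    have hE : 0 < Real.exp (θ0 + ∑ i, θ i * v y i) := Real.exp_pos _
    have hf := hpos false y
    have ht := hpos true y
    have hden : PSX false y + PSX true y ≠ 0 := by positivity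
    have h1E : (1 : ℝ) + Real.exp (θ0 + ∑ i, θ i * v y i) ≠ 0 := by positivity
    field_simp at h1
    nlinarith [h1]
  -- log ratio
  have hlog : ∀ y, Real.log (PX0 y / PX1 y)
      = θ0 + (∑ i, θ i * v y i) + (Real.log B - Real.log A) := by
    intro y
    rw [hPX0, hPX1]
    have hf := hpos false y
    have ht := hpos true y
    rw [Real.log_div (by positivity) (by positivity),
      Real.log_div hf.ne' hApos.ne', Real.log_div ht.ne' hBpos.ne', hkey y,
      Real.log_mul ht.ne' (Real.exp_ne_zero _), Real.log_exp]
    ring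
  have hsum1 : ∑ x', PX0 x' = 1 := by
    simp only [hPX0, ← Finset.sum_div]
    exact div_self hApos.ne'
  rw [hfl x, hlog x]
  have hS : ∑ x', PX0 x' * Real.log (PX0 x' / PX1 x')
      = (θ0 + (Real.log B - Real.log A)) + ∑ x', PX0 x' * ∑ i, θ i * v x' i := by
    have hterm : ∀ x' ∈ Finset.univ, PX0 x' * Real.log (PX0 x' / PX1 x')
        = PX0 x' * (θ0 + (Real.log B - Real.log A)) + PX0 x' * ∑ i, θ i * v x' i := by
      intro x' _
      rw [hlog x']
      ring
    rw [Finset.sum_congr rfl hterm, Finset.sum_add_distrib, ← Finset.sum_mul, hsum1]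
    ring
  rw [hS]
  have hswap : ∑ i, ∑ x', PX0 x' * (θ i * v x' i) = ∑ x', PX0 x' * ∑ i, θ i * v x' i := by
    rw [Finset.sum_comm]
    simp [Finset.mul_sum]
  rw [hswap]
  ring
end

section
/- If f:𝒳→ℝ satisfies E[f(X)|S=0]=0 and E[f(X)·f_m(X)|S=0]=0, then E[f(X)|Y=y,S=0]=0 for every y ∈ 𝒴={0,1}. -/
/-- If `f : 𝒳 → ℝ` satisfies `E[f(X)|S=0] = 0` and `E[f(X)·f_m(X)|S=0] = 0`,
then `E[f(X)|Y=y,S=0] = 0` for every `y ∈ 𝒴 = {0,1}`.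
Here `𝒴 = Bool` (`false ↔ 0`, `true ↔ 1`), `W x y = W_{Y|X}(y|x)` is the channel in the
Markov chain `S → X → Y`, `P0 = P_{X|S=0}` has full support,
`Q0 = P_{Y|S=0} = W ∘ P0` with `p = Q0 true ∈ (0,1)`,
`g_m(0) = √(p/(1−p))`, `g_m(1) = −√((1−p)/p)`,
`ρ_m = √(E[E[g_m(Y)|X,S=0]²|S=0]) > 0`, `f_m(x) = E[g_m(Y)|X=x,S=0]/ρ_m`, and
`E[f(X)|Y=y,S=0] = (∑ x, P0(x)·W(y|x)·f(x)) / Q0(y)`. -/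
theorem stmt15
    {𝒳 : Type*} [Fintype 𝒳]
    (P0 : 𝒳 → ℝ) (hP0pos : ∀ x, 0 < P0 x) (hP0sum : ∑ x, P0 x = 1)
    (W : 𝒳 → Bool → ℝ)
    (hWnn : ∀ x y, 0 ≤ W x y) (hWsum : ∀ x, W x false + W x true = 1)
    (Q0 : Bool → ℝ) (hQ0 : ∀ y, Q0 y = ∑ x, P0 x * W x y)
    (hp0 : 0 < Q0 true) (hp1 : Q0 true < 1)
    (gm : Bool → ℝ)
    (hgmf : gm false = Real.sqrt (Q0 true / (1 - Q0 true)))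
    (hgmt : gm true = -Real.sqrt ((1 - Q0 true) / Q0 true))
    (ρm : ℝ)
    (hρm : ρm = Real.sqrt (∑ x, P0 x * (gm false * W x false + gm true * W x true) ^ 2))
    (hρmpos : 0 < ρm)
    (fm : 𝒳 → ℝ)
    (hfm : ∀ x, fm x = (gm false * W x false + gm true * W x true) / ρm)
    (f : 𝒳 → ℝ)
    (hf : ∑ x, P0 x * f x = 0)
    (horth : ∑ x, P0 x * f x * fm x = 0) :
    ∀ y, (∑ x, P0 x * W x y * f x) / Q0 y = 0 := by
  set A := ∑ x, P0 x * W x true * f x with hA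
  set B := ∑ x, P0 x * W x false * f x with hB
  have hBA : B = -A := by
    have : B + A = ∑ x, P0 x * f x := by
      rw [hA, hB, ← Finset.sum_add_distrib]
      apply Finset.sum_congr rfl
      intro x _
      linear_combination P0 x * f x * hWsum x
    rw [hf] at this
    linarith
  have hlin : gm false * B + gm true * A = 0 := by
    have h1 : gm false * B + gm true * A = ρm * ∑ x, P0 x * f x * fm x := by
      rw [hA, hB, Finset.mul_sum, Finset.mul_sum, Finset.mul_sum,
        ← Finset.sum_add_distrib]
      apply Finset.sum_congr rfl
      intro x _
      rw [hfm x]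
      field_simp
    rw [horth, mul_zero] at h1
    exact h1
  have hgf : 0 < gm false := by
    rw [hgmf]
    apply Real.sqrt_pos.mpr
    apply div_pos hp0 (by linarith)
  have hgt : gm true < 0 := by
    rw [hgmt]
    simp only [neg_neg, Left.neg_neg_iff]
    apply Real.sqrt_pos.mpr
    apply div_pos (by linarith) hp0
  have hA0 : A = 0 := by
    rw [hBA] at hlin
    have : (gm true - gm false) * A = 0 := by ring_nf; linarith [hlin]
    rcases mul_eq_zero.mp this with h | h
    · nlinarith
    · exact h
  intro y
  cases y
  · rw [← hB, hBA, hA0]; simp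
  · rw [← hA, hA0]; simp
end

section
/- For every f:𝒳→ℝ with E[f(X)|S=0]=0, the function g(y) = E[f(X)|Y=y,S=0] satisfies g(y) = ρ_m · E[f(X)·f_m(X)|S=0] · g_m(y) for every y ∈ 𝒴={0,1}. -/
/-!
Write `A y = ∑ x, P0 x * W x y * f x`, so that `g y * Q0 y = A y`. Summing over `y` gives
`E[g(Y)|S=0] = E[f(X)|S=0] = 0`, and exchanging the sums gives
`E[g(Y) g_m(Y)|S=0] = ρ_m · E[f(X) f_m(X)|S=0]`. Zero-mean functions on a two-point space form a
line, spanned by the unit vector `g_m`, so `g = E[g(Y) g_m(Y)|S=0] · g_m`.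
-/

open Finset

noncomputable def binaryScore (q : ℝ) : Bool → ℝ
  | false => √(q / (1 - q))
  | true => -√((1 - q) / q)

lemma eq_sum_mul_binaryScore_mul_binaryScore {Q h : Bool → ℝ} (hQ : Q false + Q true = 1)
    (hq0 : 0 < Q true) (hq1 : Q true < 1) (hmean : ∑ y, Q y * h y = 0) (y : Bool) :
    h y = (∑ y', Q y' * h y' * binaryScore (Q true) y') * binaryScore (Q true) y := by
  have hq1' : 0 < 1 - Q true := by linarith
  obtain ⟨a, ha, hQt⟩ : ∃ a, 0 < a ∧ Q true = a ^ 2 :=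
    ⟨√(Q true), Real.sqrt_pos.2 hq0, (Real.sq_sqrt hq0.le).symm⟩
  obtain ⟨b, hb, hQf⟩ : ∃ b, 0 < b ∧ 1 - Q true = b ^ 2 :=
    ⟨√(1 - Q true), Real.sqrt_pos.2 hq1', (Real.sq_sqrt hq1'.le).symm⟩
  have hs0 : binaryScore (Q true) false = a / b := by
    rw [binaryScore, hQf, hQt, Real.sqrt_div' _ (sq_nonneg b), Real.sqrt_sq ha.le,
      Real.sqrt_sq hb.le]
  have hs1 : binaryScore (Q true) true = -(b / a) := by
    rw [binaryScore, hQf, hQt, Real.sqrt_div' _ (sq_nonneg a), Real.sqrt_sq ha.le,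
      Real.sqrt_sq hb.le]
  have hQ0 : Q false = b ^ 2 := by linarith
  have hab : a ^ 2 + b ^ 2 = 1 := by linarith
  rw [Fintype.sum_bool, hQ0, hQt] at hmean
  cases y <;> simp only [Fintype.sum_bool, hs0, hs1] <;> rw [hQ0, hQt] <;> field_simp
  · linear_combination (-h false) * hab + hmean
  · linear_combination (-h true) * hab + hmean

theorem stmt16_general
    {𝒳 : Type*} [Fintype 𝒳]
    (P0 : 𝒳 → ℝ) (hP0sum : ∑ x, P0 x = 1)
    (W : 𝒳 → Bool → ℝ)
    (hWsum : ∀ x, W x false + W x true = 1)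
    (Q0 : Bool → ℝ) (hQ0 : ∀ y, Q0 y = ∑ x, P0 x * W x y)
    (hp0 : 0 < Q0 true) (hp1 : Q0 true < 1)
    (gm : Bool → ℝ)
    (hgmf : gm false = Real.sqrt (Q0 true / (1 - Q0 true)))
    (hgmt : gm true = -Real.sqrt ((1 - Q0 true) / Q0 true))
    (ρm : ℝ)
    (hρmpos : 0 < ρm)
    (fm : 𝒳 → ℝ)
    (hfm : ∀ x, fm x = (gm false * W x false + gm true * W x true) / ρm)
    (f : 𝒳 → ℝ)
    (hf : ∑ x, P0 x * f x = 0)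
    (g : Bool → ℝ)
    (hg : ∀ y, g y = (∑ x, P0 x * W x y * f x) / Q0 y) :
    ∀ y, g y = ρm * (∑ x, P0 x * f x * fm x) * gm y := by
  have hgm : gm = binaryScore (Q0 true) := funext fun y => by cases y <;> assumption
  have hQ : Q0 false + Q0 true = 1 := by
    simp only [hQ0, ← sum_add_distrib, ← mul_add, hWsum, mul_one, hP0sum]
  have hQg : ∀ y, Q0 y * g y = ∑ x, P0 x * W x y * f x := fun y => by
    have hQy : Q0 y ≠ 0 := by cases y <;> linarith
    rw [hg, mul_div_cancel₀ _ hQy]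
  have hmean : ∑ y, Q0 y * g y = 0 := by
    simp only [hQg, Fintype.sum_bool, ← sum_add_distrib, ← hf]
    exact sum_congr rfl fun x _ => by linear_combination P0 x * f x * hWsum x
  have hcorr : ∑ y, Q0 y * g y * gm y = ρm * ∑ x, P0 x * f x * fm x := by
    simp only [hQg, Fintype.sum_bool, sum_mul, mul_sum, ← sum_add_distrib, hfm]
    exact sum_congr rfl fun x _ => by field_simp; ring
  intro y
  rw [← hcorr, hgm]
  exact eq_sum_mul_binaryScore_mul_binaryScore hQ hp0 hp1 hmean y

/-- For every `f : 𝒳 → ℝ` with `E[f(X)|S=0] = 0`, the function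
`g(y) = E[f(X)|Y=y,S=0]` satisfies `g(y) = ρ_m · E[f(X)·f_m(X)|S=0] · g_m(y)` for every
`y ∈ 𝒴 = {0,1}`.
Here `𝒴 = Bool` (`false ↔ 0`, `true ↔ 1`), `W x y = W_{Y|X}(y|x)` is the channel in the
Markov chain `S → X → Y`, `P0 = P_{X|S=0}` has full support,
`Q0 = P_{Y|S=0} = W ∘ P0` with `p = Q0 true ∈ (0,1)`,
`g_m(0) = √(p/(1−p))`, `g_m(1) = −√((1−p)/p)`,
`ρ_m = √(E[E[g_m(Y)|X,S=0]²|S=0]) > 0`, `f_m(x) = E[g_m(Y)|X=x,S=0]/ρ_m`, and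
`g(y) = E[f(X)|Y=y,S=0] = (∑ x, P0(x)·W(y|x)·f(x)) / Q0(y)`. -/
theorem stmt16
    {𝒳 : Type*} [Fintype 𝒳]
    (P0 : 𝒳 → ℝ) (hP0pos : ∀ x, 0 < P0 x) (hP0sum : ∑ x, P0 x = 1)
    (W : 𝒳 → Bool → ℝ)
    (hWnn : ∀ x y, 0 ≤ W x y) (hWsum : ∀ x, W x false + W x true = 1)
    (Q0 : Bool → ℝ) (hQ0 : ∀ y, Q0 y = ∑ x, P0 x * W x y)
    (hp0 : 0 < Q0 true) (hp1 : Q0 true < 1)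
    (gm : Bool → ℝ)
    (hgmf : gm false = Real.sqrt (Q0 true / (1 - Q0 true)))
    (hgmt : gm true = -Real.sqrt ((1 - Q0 true) / Q0 true))
    (ρm : ℝ)
    (hρm : ρm = Real.sqrt (∑ x, P0 x * (gm false * W x false + gm true * W x true) ^ 2))
    (hρmpos : 0 < ρm)
    (fm : 𝒳 → ℝ)
    (hfm : ∀ x, fm x = (gm false * W x false + gm true * W x true) / ρm)
    (f : 𝒳 → ℝ)
    (hf : ∑ x, P0 x * f x = 0)
    (g : Bool → ℝ)
    (hg : ∀ y, g y = (∑ x, P0 x * W x y * f x) / Q0 y) :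
    ∀ y, g y = ρm * (∑ x, P0 x * f x * fm x) * gm y :=
  stmt16_general P0 hP0sum W hWsum Q0 hQ0 hp0 hp1 gm hgmf hgmt ρm hρmpos fm hfm f hf g hg
end
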